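/- Gallai's theorem: for every finite simple graph G on n vertices with no isolated vertices, α'(G) + β'(G) = n, where α'(G) is the maximum matching size and β'(G) is the minimum edge cover size. -/

import Mathlib

/-- A set of edges is a matching set if its edges are pairwise vertex-disjoint. -/
def IsMatchingSet {V : Type*} (M : Finset (Sym2 V)) : Prop :=
  ∀ e ∈ M, ∀ e' ∈ M, e ≠ e' → ∀ v : V, ¬(v ∈ e ∧ v ∈ e')

/-- A set of edges of `G` covering every vertex. -/
def IsEdgeCoverSet {V : Type*} (G : SimpleGraph V) (S : Finset (Sym2 V)) : Prop :=
  ↑S ⊆ G.edgeSet ∧ ∀ v : V, ∃ e ∈ S, v ∈ e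

/-!
A matching `M` covers `2|M|` vertices, and one extra edge at each of the other `n - 2|M|`
vertices gives an edge cover, so `β' ≤ n - α'`. Conversely, an edge set `S` covering a vertex set
`T` contains a matching with at least `|T| - |S|` edges, by induction on `S`: when an edge `e` is
removed, either an endpoint of `e` stays covered and only the other one is dropped from `T`, or
`e` is disjoint from the rest of `S` and joins its matching. For a minimum cover and `T = V` this
gives `α' ≥ n - β'`.
-/

open Finset

section

variable {V : Type*}

theorem IsMatchingSet.insert [DecidableEq V] {M : Finset (Sym2 V)} {e : Sym2 V}
    (hM : IsMatchingSet M) (he : ∀ v ∈ e, ∀ f ∈ M, v ∉ f) : IsMatchingSet (insert e M) := by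
  intro e₁ he₁ e₂ he₂ hne v ⟨hv₁, hv₂⟩
  rcases mem_insert.1 he₁ with rfl | h₁ <;> rcases mem_insert.1 he₂ with rfl | h₂
  · exact hne rfl
  · exact he v hv₁ e₂ h₂ hv₂
  · exact he v hv₂ e₁ h₁ hv₁
  · exact hM e₁ h₁ e₂ h₂ hne v ⟨hv₁, hv₂⟩

theorem IsMatchingSet.card_biUnion_toFinset [DecidableEq V] {M : Finset (Sym2 V)}
    (hM : IsMatchingSet M) (hdiag : ∀ e ∈ M, ¬e.IsDiag) :
    #(M.biUnion Sym2.toFinset) = 2 * #M := by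
  rw [card_biUnion, sum_congr rfl fun e he => Sym2.card_toFinset_of_not_isDiag e (hdiag e he),
    sum_const, smul_eq_mul, mul_comm]
  intro e he e' he' hne
  simp only [Function.onFun, disjoint_left, Sym2.mem_toFinset]
  exact fun v hv hv' => hM e he e' he' hne v ⟨hv, hv'⟩

theorem exists_isEdgeCoverSet_card_add_le [Fintype V] [DecidableEq V] {G : SimpleGraph V}
    (hiso : ∀ v : V, ∃ w : V, G.Adj v w) {M : Finset (Sym2 V)} (hMsub : ↑M ⊆ G.edgeSet)
    (hM : IsMatchingSet M) :
    ∃ C : Finset (Sym2 V), IsEdgeCoverSet G C ∧ #M + #C ≤ Fintype.card V := by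
  choose w hw using hiso
  set unmatched := univ \ M.biUnion Sym2.toFinset
  refine ⟨M ∪ unmatched.image fun v => s(v, w v), ⟨?_, fun v => ?_⟩, ?_⟩
  · simp only [coe_union, coe_image, Set.union_subset_iff, Set.image_subset_iff]
    exact ⟨hMsub, fun v _ => hw v⟩
  · by_cases hv : v ∈ M.biUnion Sym2.toFinset
    · obtain ⟨e, he, hve⟩ := mem_biUnion.1 hv
      exact ⟨e, mem_union_left _ he, Sym2.mem_toFinset.1 hve⟩
    · exact ⟨s(v, w v), mem_union_right _ (mem_image_of_mem _ (by simpa [unmatched] using hv)),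
        Sym2.mem_mk_left v (w v)⟩
  · have hmatched := hM.card_biUnion_toFinset fun e he => G.not_isDiag_of_mem_edgeSet (hMsub he)
    have hunmatched : #unmatched = Fintype.card V - 2 * #M := by
      rw [card_sdiff_of_subset (subset_univ _), card_univ, hmatched]
    have hle : 2 * #M ≤ Fintype.card V := hmatched ▸ card_le_univ _
    have := card_union_le M (unmatched.image fun v => s(v, w v))
    have := card_image_le (s := unmatched) (f := fun v => s(v, w v))
    omega

theorem forall_covered_sdiff_of_insert [DecidableEq V] {S : Finset (Sym2 V)} {e : Sym2 V}
    {T U : Finset V} (hT : ∀ v ∈ T, ∃ f ∈ insert e S, v ∈ f)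
    (hU : ∀ v ∈ e, v ∉ U → ∃ f ∈ S, v ∈ f) :
    ∀ v ∈ T \ U, ∃ f ∈ S, v ∈ f := by
  intro v hv
  obtain ⟨f, hf, hvf⟩ := hT v (mem_sdiff.1 hv).1
  rcases mem_insert.1 hf with rfl | hf
  · exact hU v hvf (mem_sdiff.1 hv).2
  · exact ⟨f, hf, hvf⟩

theorem exists_isMatchingSet_subset_card_le_card_add [DecidableEq V] (S : Finset (Sym2 V))
    (T : Finset V) (hT : ∀ v ∈ T, ∃ e ∈ S, v ∈ e) :
    ∃ M ⊆ S, IsMatchingSet M ∧ #T ≤ #M + #S := by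
  induction S using Finset.induction_on generalizing T with
  | empty =>
    refine ⟨∅, subset_refl _, by simp [IsMatchingSet], ?_⟩
    simp only [card_empty, add_zero, nonpos_iff_eq_zero, card_eq_zero]
    exact eq_empty_of_forall_notMem fun v hv => by simpa using hT v hv
  | insert e S heS ih =>
    have ih_sdiff : ∀ U : Finset V, (∀ v ∈ e, v ∉ U → ∃ f ∈ S, v ∈ f) →
        ∃ M ⊆ S, IsMatchingSet M ∧ #T ≤ #M + #S + #U := fun U hU => by
      obtain ⟨M, hMS, hM, hcard⟩ := ih (T \ U) (forall_covered_sdiff_of_insert hT hU)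
      exact ⟨M, hMS, hM, by have := card_le_card_sdiff_add_card (s := T) (t := U); omega⟩
    rw [card_insert_of_notMem heS]
    by_cases hshared : ∃ x ∈ e, ∃ f ∈ S, x ∈ f
    · obtain ⟨x, hx, hxS⟩ := hshared
      obtain ⟨M, hMS, hM, hcard⟩ := ih_sdiff {Sym2.Mem.other hx} fun v hv hvy => by
        rw [← Sym2.other_spec hx, Sym2.mem_iff] at hv
        rcases hv with rfl | rfl
        · exact hxS
        · simp at hvy
      exact ⟨M, hMS.trans (subset_insert _ _), hM, by rw [card_singleton] at hcard; omega⟩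
    · push Not at hshared
      obtain ⟨M, hMS, hM, hcard⟩ := ih_sdiff e.toFinset
        fun v hv hvU => absurd hv (by simpa using hvU)
      refine ⟨insert e M, insert_subset_insert _ hMS,
        hM.insert fun v hv f hf => hshared v hv f (hMS hf), ?_⟩
      have : #e.toFinset ≤ 2 := by rw [Sym2.card_toFinset]; split <;> omega
      rw [card_insert_of_notMem fun h => heS (hMS h)]
      omega

end

/-- Gallai's theorem: α'(G) + β'(G) = n for graphs without isolated vertices. -/
theorem stmt2 {V : Type*} [Fintype V] [DecidableEq V] (G : SimpleGraph V)
    (hiso : ∀ v : V, ∃ w : V, G.Adj v w)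
    (M : Finset (Sym2 V)) (hMsub : ↑M ⊆ G.edgeSet) (hMmatch : IsMatchingSet M)
    (hMmax : ∀ M' : Finset (Sym2 V), ↑M' ⊆ G.edgeSet → IsMatchingSet M' →
      M'.card ≤ M.card)
    (C : Finset (Sym2 V)) (hC : IsEdgeCoverSet G C)
    (hCmin : ∀ C' : Finset (Sym2 V), IsEdgeCoverSet G C' → C.card ≤ C'.card) :
    M.card + C.card = Fintype.card V := by
  obtain ⟨M', hM'C, hM', hcardM'⟩ :=
    exists_isMatchingSet_subset_card_le_card_add C univ fun v _ => hC.2 v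
  have hM'le := hMmax M' ((coe_subset.2 hM'C).trans hC.1) hM'
  obtain ⟨C', hC', hcardC'⟩ := exists_isEdgeCoverSet_card_add_le hiso hMsub hMmatch
  have hCle := hCmin C' hC'
  rw [card_univ] at hcardM'
  omega
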